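/- Let n ≥ 3, let r be a real number with √2 < r ≤ √3, let Q = [0, 2n] × [0, 2r] ⊆ ℝ², and let W = {(2i−1, r) : i = 1, …, n} be the 1×n grid placement. Then for every real y with 0 < y < 2(r − √2), the single point p = (3, r + y) satisfies μ({q ∈ Q : dist(q, p) < infDist(q, W)}) > 2r. (For r > √2, Barney's first point can steal strictly more than μ(Q)/(2n) from the 1×n grid.) -/

import Mathlib

open MeasureTheory Metric Set
open scoped ENNReal

/-- The point `(x, y)` in the Euclidean plane. -/
noncomputable def pt (x y : ℝ) : EuclideanSpace ℝ (Fin 2) :=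
  (WithLp.equiv 2 (Fin 2 → ℝ)).symm ![x, y]

/-- The rectangular board `[0, 2n] × [0, 2r]`. -/
def bigBoard (n : ℕ) (r : ℝ) : Set (EuclideanSpace ℝ (Fin 2)) :=
  {q | q 0 ∈ Set.Icc (0:ℝ) (2 * n) ∧ q 1 ∈ Set.Icc (0:ℝ) (2 * r)}

/-!
The point `p` steals the trapezoid lying above the bisector `b = r + y / 2` of `p` and `(3, r)`
and between the bisectors of `p` with `(1, r)` and `(5, r)`; since `y r < 2` the trapezoid has
half-width less than `2`, so the white points farther out do not cut it. Its area is
`2r + (y/2)((r - y/2)² - 2)`, which exceeds `2r` precisely because `r - y/2 > √2`.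
-/

lemma dist_pt_sq (q : EuclideanSpace ℝ (Fin 2)) (x z : ℝ) :
    dist q (pt x z) ^ 2 = (q 0 - x) ^ 2 + (q 1 - z) ^ 2 := by
  rw [EuclideanSpace.dist_eq, Real.sq_sqrt (by positivity)]
  simp [pt, Fin.sum_univ_two, Real.dist_eq, sq_abs]

lemma measurePreserving_swapCoords :
    MeasurePreserving (fun q : EuclideanSpace ℝ (Fin 2) => (q 1, q 0)) volume volume :=
  Measure.measurePreserving_swap.comp ((volume_preserving_finTwoArrow ℝ).comp
    (EuclideanSpace.volume_preserving_symm_measurableEquiv_toLp (Fin 2)))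

lemma lt_infDist_of_isCompact {E : Type*} [PseudoMetricSpace E] {s : Set E} (hs : IsCompact s)
    (hne : s.Nonempty) {q : E} {d : ℝ} (h : ∀ w ∈ s, d < dist q w) : d < infDist q s := by
  obtain ⟨w, hw, hdist⟩ := hs.exists_infDist_eq_dist hne q
  exact hdist ▸ h w hw

lemma bisector_margin_pos (k : ℤ) {s w : ℝ} (hw1 : 1 < w) (hw2 : w < 2) (hs : |s| < w) :
    0 < k ^ 2 - k * s + (w - 1) := by
  obtain ⟨hs1, hs2⟩ := abs_lt.mp hs
  rcases lt_trichotomy k 0 with hk | rfl | hk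
  · have hk' : (k : ℝ) ≤ -1 := by exact_mod_cast Int.le_sub_one_of_lt hk
    nlinarith
  · push_cast; linarith
  · have hk' : (1 : ℝ) ≤ k := by exact_mod_cast hk
    nlinarith

/-- The lines `|t - 3| = stealWidth r y b` are the perpendicular bisectors between
`(3, r + y)` and the white points `(1, r)`, `(5, r)`. -/
noncomputable def stealWidth (r y b : ℝ) : ℝ := 1 - y ^ 2 / 4 + y * (b - r) / 2

def stolenTrapezoid (r y : ℝ) : Set (EuclideanSpace ℝ (Fin 2)) :=
  {q | q 1 ∈ Ioo (r + y / 2) (2 * r) ∧ |q 0 - 3| < stealWidth r y (q 1)}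

section

variable {r y : ℝ} {q : EuclideanSpace ℝ (Fin 2)}

lemma one_lt_stealWidth (hy : 0 < y) (hq : q ∈ stolenTrapezoid r y) :
    1 < stealWidth r y (q 1) := by
  have := mul_pos hy (sub_pos.2 hq.1.1)
  unfold stealWidth; nlinarith

lemma stealWidth_lt_two (hy : 0 < y) (hyr : y * r < 2) (hq : q ∈ stolenTrapezoid r y) :
    stealWidth r y (q 1) < 2 := by
  have := mul_lt_mul_of_pos_left hq.1.2 hy
  unfold stealWidth; nlinarith

lemma dist_lt_dist_grid_of_mem_stolenTrapezoid (hy : 0 < y) (hyr : y * r < 2)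
    (hq : q ∈ stolenTrapezoid r y) (m : ℤ) :
    dist q (pt 3 (r + y)) < dist q (pt (2 * m + 1) r) := by
  have hmargin := bisector_margin_pos (m - 1) (one_lt_stealWidth hy hq)
    (stealWidth_lt_two hy hyr hq) hq.2
  -- with `k = m - 1` and `s = q 0 - 3`, the two squared distances differ by `4 * hmargin`
  refine lt_of_pow_lt_pow_left₀ 2 dist_nonneg ?_
  rw [dist_pt_sq, dist_pt_sq]
  push_cast at hmargin
  unfold stealWidth at hmargin
  nlinarith

lemma stolenTrapezoid_subset_board (n : ℕ) (hn : 3 ≤ n) (hy : 0 < y) (hyr : y * r < 2)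
    (hq : q ∈ stolenTrapezoid r y) : q ∈ bigBoard n r := by
  have hw := stealWidth_lt_two hy hyr hq
  have hs := abs_lt.mp (hq.2.trans hw)
  have hn' : (3 : ℝ) ≤ n := by exact_mod_cast hn
  obtain ⟨hb1, hb2⟩ := hq.1
  exact ⟨⟨by linarith, by linarith⟩, ⟨by nlinarith, hb2.le⟩⟩

end

lemma stolenTrapezoid_eq_preimage (r y : ℝ) :
    stolenTrapezoid r y = (fun q : EuclideanSpace ℝ (Fin 2) => (q 1, q 0)) ⁻¹'
      regionBetween (fun b => 3 - stealWidth r y b) (fun b => 3 + stealWidth r y b)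
        (Ioo (r + y / 2) (2 * r)) := by
  ext q
  simp only [stolenTrapezoid, regionBetween, mem_preimage, mem_ofPred_eq, mem_Ioo, abs_lt,
    and_congr_right_iff]
  intro _
  constructor <;> rintro ⟨h1, h2⟩ <;> constructor <;> linarith

lemma integral_stealWidth (r y : ℝ) :
    ∫ b in (r + y / 2)..(2 * r), 2 * stealWidth r y b =
      2 * r + y / 2 * ((r - y / 2) ^ 2 - 2) := by
  simp only [stealWidth]
  have h : ∀ b : ℝ, 2 * (1 - y ^ 2 / 4 + y * (b - r) / 2) = (2 - y ^ 2 / 2 - y * r) + y * b :=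
    fun b => by ring
  simp only [h]
  rw [intervalIntegral.integral_add intervalIntegrable_const
    (intervalIntegral.intervalIntegrable_id.const_mul y), intervalIntegral.integral_const,
    intervalIntegral.integral_const_mul, integral_id, smul_eq_mul]
  ring

lemma volume_stolenTrapezoid {r y : ℝ} (hy : 0 ≤ y) (hyr : y ≤ 2 * r) :
    volume (stolenTrapezoid r y) = ENNReal.ofReal (2 * r + y / 2 * ((r - y / 2) ^ 2 - 2)) := by
  have hf : Continuous fun b => 3 - stealWidth r y b := by unfold stealWidth; fun_prop
  have hg : Continuous fun b => 3 + stealWidth r y b := by unfold stealWidth; fun_prop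
  have hle : ∀ b ∈ Ioo (r + y / 2) (2 * r), 3 - stealWidth r y b ≤ 3 + stealWidth r y b := by
    intro b hb
    have := mul_nonneg hy (sub_pos.2 hb.1).le
    unfold stealWidth; nlinarith
  rw [stolenTrapezoid_eq_preimage, measurePreserving_swapCoords.measure_preimage
    (measurableSet_regionBetween hf.measurable hg.measurable measurableSet_Ioo).nullMeasurableSet,
    Measure.volume_eq_prod, volume_regionBetween_eq_integral
      (hf.integrableOn_Icc.mono_set Ioo_subset_Icc_self)
      (hg.integrableOn_Icc.mono_set Ioo_subset_Icc_self) measurableSet_Ioo hle,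
    ← integral_Ioc_eq_integral_Ioo, ← intervalIntegral.integral_of_le (by linarith),
    ← integral_stealWidth]
  congr 2 with b
  simp only [Pi.sub_apply]; ring

theorem stmt_11_general (n : ℕ) (hn : 3 ≤ n) (r : ℝ) (hr2 : r ≤ Real.sqrt 3)
    (W : Set (EuclideanSpace ℝ (Fin 2)))
    (hW : W = Set.range fun i : Fin n => pt (2 * (i : ℝ) + 1) r)
    (y : ℝ) (hy0 : 0 < y) (hy1 : y < 2 * (r - Real.sqrt 2))
    (p : EuclideanSpace ℝ (Fin 2)) (hp : p = pt 3 (r + y)) :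
    volume {q | q ∈ bigBoard n r ∧ dist q p < infDist q W} > ENNReal.ofReal (2 * r) := by
  have hs2 : 7 / 5 < Real.sqrt 2 := Real.lt_sqrt_of_sq_lt (by norm_num)
  have hs3 : Real.sqrt 3 < 7 / 4 := (Real.sqrt_lt' (by norm_num)).2 (by norm_num)
  have hyr : y * r < 2 := by
    have := mul_lt_mul_of_pos_right hy1 (by linarith : 0 < r)
    nlinarith
  have hgap : 2 < (r - y / 2) ^ 2 := by
    have := pow_lt_pow_left₀ (by linarith : Real.sqrt 2 < r - y / 2) (Real.sqrt_nonneg 2)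
      two_ne_zero
    rwa [Real.sq_sqrt zero_le_two] at this
  have hW_ne : W.Nonempty := hW ▸ range_nonempty_iff_nonempty.2 ⟨⟨0, by omega⟩⟩
  have hsub : stolenTrapezoid r y ⊆ {q | q ∈ bigBoard n r ∧ dist q p < infDist q W} := by
    intro q hq
    refine ⟨stolenTrapezoid_subset_board n hn hy0 hyr hq,
      lt_infDist_of_isCompact (hW ▸ (finite_range _).isCompact) hW_ne ?_⟩
    rw [hW, hp]
    rintro _ ⟨i, rfl⟩
    exact_mod_cast dist_lt_dist_grid_of_mem_stolenTrapezoid hy0 hyr hq i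
  calc ENNReal.ofReal (2 * r)
      < ENNReal.ofReal (2 * r + y / 2 * ((r - y / 2) ^ 2 - 2)) := by
        have := mul_pos (half_pos hy0) (sub_pos.2 hgap)
        rw [ENNReal.ofReal_lt_ofReal_iff (by linarith)]
        linarith
    _ = volume (stolenTrapezoid r y) := (volume_stolenTrapezoid hy0.le (by linarith)).symm
    _ ≤ _ := measure_mono hsub

/-- For `√2 < r ≤ √3`, against the `1 × n` grid `W = {(2i−1, r) : i = 1, …, n}`
on the board `[0, 2n] × [0, 2r]`, the single point `p = (3, r + y)` with
`0 < y < 2(r − √2)` steals an area strictly greater than `2r`. -/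
theorem stmt_11 (n : ℕ) (hn : 3 ≤ n) (r : ℝ) (hr1 : Real.sqrt 2 < r) (hr2 : r ≤ Real.sqrt 3)
    (W : Set (EuclideanSpace ℝ (Fin 2)))
    (hW : W = Set.range fun i : Fin n => pt (2 * (i : ℝ) + 1) r)
    (y : ℝ) (hy0 : 0 < y) (hy1 : y < 2 * (r - Real.sqrt 2))
    (p : EuclideanSpace ℝ (Fin 2)) (hp : p = pt 3 (r + y)) :
    volume {q | q ∈ bigBoard n r ∧ dist q p < infDist q W} > ENNReal.ofReal (2 * r) :=
  stmt_11_general n hn r hr2 W hW y hy0 hy1 p hp
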